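/- Derivative L² bound propagation for controls: let u^k, ū be absolutely continuous on [0,T] with u^k(t_j) − ū(t_j) = x^k(t_j) − x̄(t_j) at mesh points t_j = jT/k and u^k piecewise linear, ū ∈ W^{1,2} with var(u̇̄,[0,T]) ≤ μ and var(ẋ̄,[0,T]) ≤ μ. Then ∫_0^T ‖u̇^k(t) − u̇̄(t)‖² dt ≤ 4 ∫_0^T ‖ẋ^k(t) − ẋ̄(t)‖² dt + 20 h_k μ² + 6T·4^{−k+1}, where x^k is the piecewise linear function with the given mesh values and h_k = T/k. -/

import Mathlib

/-!
On a mesh interval `[a, b]` of length `h`, the mesh relation says that the slopes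
`(b - a)⁻¹ • p` of `u^k` and `(b - a)⁻¹ • q` of `x^k` exceed the interval averages of `u̇̄` and
`ẋ̄` by the same vector. An average deviates from the function by at most the variation `V` on
the interval, so pointwise `‖u̇^k - u̇̄‖ ≤ ‖ẋ^k - ẋ̄‖ + V_x + V_u`, and after squaring and
integrating each interval contributes `(4 V_x² + 2 V_u²) h` besides `4 ∫ ‖ẋ^k - ẋ̄‖²`. Since the
variations on the mesh intervals add up to at most `μ`, their squares add up to at most `μ²`, so
the error terms total at most `6 h μ²`.
-/

open MeasureTheory Set Finset

/-- The uniform mesh point `t_j = j·T/k`. -/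
noncomputable def meshPt (T : ℝ) (k j : ℕ) : ℝ := j * (T / k)

section Mesh

variable {T : ℝ} {k j : ℕ}

theorem meshPt_succ_sub (T : ℝ) (k j : ℕ) : meshPt T k (j + 1) - meshPt T k j = T / k := by
  simp only [meshPt]
  push_cast
  ring

theorem meshPt_lt_succ (hT : 0 < T) (hk : 0 < k) (j : ℕ) :
    meshPt T k j < meshPt T k (j + 1) := by
  have : 0 < T / k := by positivity
  linarith [meshPt_succ_sub T k j]

theorem meshPt_monotone (hT : 0 ≤ T) : Monotone (meshPt T k) :=
  fun _ _ hij => mul_le_mul_of_nonneg_right (Nat.cast_le.mpr hij) (by positivity)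

theorem meshPt_mem_Icc (hT : 0 ≤ T) (hj : j ≤ k) : meshPt T k j ∈ Icc 0 T := by
  refine ⟨by unfold meshPt; positivity, (meshPt_monotone hT hj).trans ?_⟩
  rcases k.eq_zero_or_pos with rfl | hk
  · simpa [meshPt] using hT
  · exact (mul_div_cancel₀ T (Nat.cast_pos.mpr hk).ne').le

theorem Icc_meshPt_subset (hT : 0 ≤ T) (hj : j < k) :
    Icc (meshPt T k j) (meshPt T k (j + 1)) ⊆ Icc 0 T :=
  Icc_subset_Icc (meshPt_mem_Icc hT hj.le).1 (meshPt_mem_Icc hT hj).2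

end Mesh

theorem sum_sq_toReal_eVariationOn_Icc_le {α E : Type*} [LinearOrder α] [PseudoEMetricSpace E]
    {f : α → E} {t : ℕ → α} (ht : Monotone t) (k : ℕ)
    (hf : BoundedVariationOn f (Icc (t 0) (t k))) :
    ∑ j ∈ range k, (eVariationOn f (Icc (t j) (t (j + 1)))).toReal ^ 2
      ≤ (eVariationOn f (Icc (t 0) (t k))).toReal ^ 2 := by
  have hfin : ∀ j ∈ range k, eVariationOn f (Icc (t j) (t (j + 1))) ≠ ⊤ := fun j hj =>
    ne_top_of_le_ne_top hf
      (eVariationOn.mono f (Icc_subset_Icc (ht j.zero_le) (ht (mem_range.mp hj))))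
  calc _ ≤ (∑ j ∈ range k, (eVariationOn f (Icc (t j) (t (j + 1)))).toReal) ^ 2 :=
        sum_sq_le_sq_sum_of_nonneg fun _ _ => ENNReal.toReal_nonneg
    _ = _ := by rw [← ENNReal.toReal_sum hfin, eVariationOn.sum' f ht]

theorem sum_sq_toReal_eVariationOn_meshPt_le {E : Type*} [PseudoEMetricSpace E] {f : ℝ → E}
    {T μ : ℝ} (hT : 0 ≤ T) (hμ : 0 ≤ μ) (k : ℕ)
    (hf : eVariationOn f (Icc 0 T) ≤ ENNReal.ofReal μ) :
    ∑ j ∈ range k, (eVariationOn f (Icc (meshPt T k j) (meshPt T k (j + 1)))).toReal ^ 2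
      ≤ μ ^ 2 := by
  have hle : eVariationOn f (Icc (meshPt T k 0) (meshPt T k k)) ≤ ENNReal.ofReal μ :=
    (eVariationOn.mono f (Icc_subset_Icc (meshPt_mem_Icc hT k.zero_le).1
      (meshPt_mem_Icc hT le_rfl).2)).trans hf
  exact (sum_sq_toReal_eVariationOn_Icc_le (meshPt_monotone hT) k
    (ne_top_of_le_ne_top ENNReal.ofReal_ne_top hle)).trans
    (pow_le_pow_left₀ ENNReal.toReal_nonneg (ENNReal.toReal_le_of_le_ofReal hμ hle) 2)

theorem norm_add_add_sq_le {E : Type*} [SeminormedAddCommGroup E] (x y z : E) :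
    ‖x + y + z‖ ^ 2 ≤ 4 * ‖x‖ ^ 2 + 4 * ‖y‖ ^ 2 + 2 * ‖z‖ ^ 2 := by
  have := norm_add₃_le (a := x) (b := y) (c := z)
  nlinarith [norm_nonneg (x + y + z), norm_nonneg x, norm_nonneg y, norm_nonneg z,
    sq_nonneg (‖x‖ - ‖y‖), sq_nonneg (‖x‖ + ‖y‖ - ‖z‖)]

section IntervalAverage

variable {E : Type*} [NormedAddCommGroup E] [NormedSpace ℝ E] [CompleteSpace E]

theorem norm_inv_smul_integral_sub_le_eVariationOn {f : ℝ → E} {a b t : ℝ} (hab : a < b)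
    (hf : IntervalIntegrable f volume a b) (hbv : BoundedVariationOn f (Icc a b))
    (ht : t ∈ Icc a b) :
    ‖(b - a)⁻¹ • (∫ τ in a..b, f τ) - f t‖ ≤ (eVariationOn f (Icc a b)).toReal := by
  have hba : 0 < b - a := sub_pos.mpr hab
  have hdev : ‖∫ τ in a..b, (f τ - f t)‖ ≤ (eVariationOn f (Icc a b)).toReal * |b - a| :=
    intervalIntegral.norm_integral_le_of_norm_le_const fun s hs => by
      rw [← dist_eq_norm]
      exact hbv.dist_le (Ioc_subset_Icc_self (uIoc_of_le hab.le ▸ hs)) ht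
  have hmean : (b - a)⁻¹ • (∫ τ in a..b, f τ) - f t = (b - a)⁻¹ • ∫ τ in a..b, (f τ - f t) := by
    rw [intervalIntegral.integral_sub hf intervalIntegrable_const, intervalIntegral.integral_const,
      smul_sub, smul_smul, inv_mul_cancel₀ hba.ne', one_smul]
  rw [hmean, norm_smul, norm_inv, Real.norm_of_nonneg hba.le, inv_mul_le_iff₀ hba, mul_comm]
  rwa [abs_of_pos hba] at hdev

theorem integral_norm_inv_smul_sub_sq_le {f g : ℝ → E} {a b : ℝ} {p q : E} (hab : a < b)
    (hf : IntervalIntegrable f volume a b) (hg : MemLp g 2 (volume.restrict (Ioc a b)))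
    (hfbv : BoundedVariationOn f (Icc a b)) (hgbv : BoundedVariationOn g (Icc a b))
    (hpq : p - ∫ τ in a..b, f τ = q - ∫ τ in a..b, g τ) :
    ∫ t in a..b, ‖(b - a)⁻¹ • p - f t‖ ^ 2
      ≤ 4 * (∫ t in a..b, ‖(b - a)⁻¹ • q - g t‖ ^ 2)
        + (4 * (eVariationOn g (Icc a b)).toReal ^ 2
          + 2 * (eVariationOn f (Icc a b)).toReal ^ 2) * (b - a) := by
  set Vf := (eVariationOn f (Icc a b)).toReal
  set Vg := (eVariationOn g (Icc a b)).toReal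
  have hgi : IntervalIntegrable g volume a b :=
    (intervalIntegrable_iff_integrableOn_Ioc_of_le hab.le).2 (hg.integrable one_le_two)
  have hpt : ∀ t ∈ Icc a b,
      ‖(b - a)⁻¹ • p - f t‖ ^ 2 ≤ 4 * ‖(b - a)⁻¹ • q - g t‖ ^ 2 + (4 * Vg ^ 2 + 2 * Vf ^ 2) := by
    intro t ht
    have hsplit : (b - a)⁻¹ • p - f t = ((b - a)⁻¹ • q - g t)
        + (g t - (b - a)⁻¹ • ∫ τ in a..b, g τ) + ((b - a)⁻¹ • (∫ τ in a..b, f τ) - f t) := by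
      rw [show p = q - (∫ τ in a..b, g τ) + ∫ τ in a..b, f τ by rw [← hpq]; abel, smul_add,
        smul_sub]
      abel
    have hdg : ‖g t - (b - a)⁻¹ • ∫ τ in a..b, g τ‖ ^ 2 ≤ Vg ^ 2 := by
      rw [norm_sub_rev]
      exact pow_le_pow_left₀ (norm_nonneg _)
        (norm_inv_smul_integral_sub_le_eVariationOn hab hgi hgbv ht) 2
    have hdf : ‖(b - a)⁻¹ • (∫ τ in a..b, f τ) - f t‖ ^ 2 ≤ Vf ^ 2 :=
      pow_le_pow_left₀ (norm_nonneg _)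
        (norm_inv_smul_integral_sub_le_eVariationOn hab hf hfbv ht) 2
    rw [hsplit]
    linarith [norm_add_add_sq_le ((b - a)⁻¹ • q - g t) (g t - (b - a)⁻¹ • ∫ τ in a..b, g τ)
      ((b - a)⁻¹ • (∫ τ in a..b, f τ) - f t)]
  have hsq : IntervalIntegrable (fun t => ‖(b - a)⁻¹ • q - g t‖ ^ 2) volume a b :=
    (intervalIntegrable_iff_integrableOn_Ioc_of_le hab.le).2
      (((memLp_const _).sub hg).integrable_norm_pow two_ne_zero)
  calc ∫ t in a..b, ‖(b - a)⁻¹ • p - f t‖ ^ 2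
      ≤ ∫ t in a..b, (4 * ‖(b - a)⁻¹ • q - g t‖ ^ 2 + (4 * Vg ^ 2 + 2 * Vf ^ 2)) := by
        rw [intervalIntegral.integral_of_le hab.le, intervalIntegral.integral_of_le hab.le]
        refine integral_mono_of_nonneg (ae_of_all _ fun _ => by positivity)
          ((hsq.const_mul 4).add intervalIntegrable_const).1 ?_
        exact (ae_restrict_iff' measurableSet_Ioc).2
          (ae_of_all _ fun t ht => hpt t (Ioc_subset_Icc_self ht))
    _ = _ := by
        rw [intervalIntegral.integral_add (hsq.const_mul 4) intervalIntegrable_const,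
          intervalIntegral.integral_const_mul, intervalIntegral.integral_const, smul_eq_mul]
        ring

theorem integral_norm_inv_smul_sub_sq_le_meshPt {T : ℝ} {k j : ℕ} {ubar u' xbar x' : ℝ → E}
    {uv xv : ℕ → E} (hT : 0 < T) (hj : j < k)
    (hftcu : ∀ a b, a ∈ Icc 0 T → b ∈ Icc 0 T → ubar b - ubar a = ∫ τ in a..b, u' τ)
    (hftcx : ∀ a b, a ∈ Icc 0 T → b ∈ Icc 0 T → xbar b - xbar a = ∫ τ in a..b, x' τ)
    (hu : IntegrableOn u' (Icc 0 T)) (hx : MemLp x' 2 (volume.restrict (Icc 0 T)))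
    (hbu : BoundedVariationOn u' (Icc 0 T)) (hbx : BoundedVariationOn x' (Icc 0 T))
    (hrel : ∀ i ≤ k, uv i - ubar (meshPt T k i) = xv i - xbar (meshPt T k i)) :
    ∫ t in meshPt T k j..meshPt T k (j + 1), ‖(T / k)⁻¹ • (uv (j + 1) - uv j) - u' t‖ ^ 2
      ≤ 4 * (∫ t in meshPt T k j..meshPt T k (j + 1),
          ‖(T / k)⁻¹ • (xv (j + 1) - xv j) - x' t‖ ^ 2)
        + (4 * (eVariationOn x' (Icc (meshPt T k j) (meshPt T k (j + 1)))).toReal ^ 2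
          + 2 * (eVariationOn u' (Icc (meshPt T k j) (meshPt T k (j + 1)))).toReal ^ 2)
          * (T / k) := by
  have hsub := Icc_meshPt_subset hT.le hj
  have ha := meshPt_mem_Icc hT.le hj.le
  have hb := meshPt_mem_Icc hT.le hj
  have hjump : uv (j + 1) - uv j - ∫ τ in meshPt T k j..meshPt T k (j + 1), u' τ
      = xv (j + 1) - xv j - ∫ τ in meshPt T k j..meshPt T k (j + 1), x' τ := by
    rw [← hftcu _ _ ha hb, ← hftcx _ _ ha hb]
    linear_combination (norm := module) hrel (j + 1) hj - hrel j hj.le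
  have := integral_norm_inv_smul_sub_sq_le (meshPt_lt_succ hT (j.zero_le.trans_lt hj) j)
    ((hu.mono_set (uIcc_subset_Icc ha hb)).intervalIntegrable)
    (hx.mono_measure (Measure.restrict_mono (Ioc_subset_Icc_self.trans hsub) le_rfl))
    (hbu.mono hsub) (hbx.mono hsub) hjump
  rwa [meshPt_succ_sub] at this

end IntervalAverage

theorem control_derivative_propagation_general {n : ℕ} (T : ℝ) (hT : 0 < T) (k : ℕ)
    (ubar u' xbar x' : ℝ → EuclideanSpace ℝ (Fin n)) (μ : ℝ) (hμ : 0 ≤ μ)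
    (uv xv : ℕ → EuclideanSpace ℝ (Fin n))
    (hftcu : ∀ a b, a ∈ Icc 0 T → b ∈ Icc 0 T → ubar b - ubar a = ∫ τ in a..b, u' τ)
    (hftcx : ∀ a b, a ∈ Icc 0 T → b ∈ Icc 0 T → xbar b - xbar a = ∫ τ in a..b, x' τ)
    (humem : MemLp u' 2 (volume.restrict (Icc 0 T)))
    (hxmem : MemLp x' 2 (volume.restrict (Icc 0 T)))
    (hvaru : eVariationOn u' (Icc 0 T) ≤ ENNReal.ofReal μ)
    (hvarx : eVariationOn x' (Icc 0 T) ≤ ENNReal.ofReal μ)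
    (hrel : ∀ j ≤ k, uv j - ubar (meshPt T k j) = xv j - xbar (meshPt T k j)) :
    ∑ j ∈ range k, (∫ t in meshPt T k j..meshPt T k (j + 1),
        ‖(T / k)⁻¹ • (uv (j + 1) - uv j) - u' t‖ ^ 2)
      ≤ 4 * ∑ j ∈ range k, (∫ t in meshPt T k j..meshPt T k (j + 1),
          ‖(T / k)⁻¹ • (xv (j + 1) - xv j) - x' t‖ ^ 2)
        + 20 * (T / k) * μ ^ 2 + 6 * T * (4 * (4:ℝ)⁻¹ ^ k) := by
  set X : ℕ → ℝ := fun j => ∫ t in meshPt T k j..meshPt T k (j + 1),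
    ‖(T / k)⁻¹ • (xv (j + 1) - xv j) - x' t‖ ^ 2
  set Vu : ℕ → ℝ := fun j => (eVariationOn u' (Icc (meshPt T k j) (meshPt T k (j + 1)))).toReal
  set Vx : ℕ → ℝ := fun j => (eVariationOn x' (Icc (meshPt T k j) (meshPt T k (j + 1)))).toReal
  have hVu : ∑ j ∈ range k, Vu j ^ 2 ≤ μ ^ 2 :=
    sum_sq_toReal_eVariationOn_meshPt_le hT.le hμ k hvaru
  have hVx : ∑ j ∈ range k, Vx j ^ 2 ≤ μ ^ 2 :=
    sum_sq_toReal_eVariationOn_meshPt_le hT.le hμ k hvarx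
  have hh : 0 ≤ T / k := by positivity
  calc _ ≤ ∑ j ∈ range k, (4 * X j + (4 * Vx j ^ 2 + 2 * Vu j ^ 2) * (T / k)) :=
        sum_le_sum fun j hj => integral_norm_inv_smul_sub_sq_le_meshPt hT (mem_range.mp hj)
          hftcu hftcx (humem.integrable one_le_two) hxmem
          (ne_top_of_le_ne_top ENNReal.ofReal_ne_top hvaru)
          (ne_top_of_le_ne_top ENNReal.ofReal_ne_top hvarx) hrel
    _ = 4 * ∑ j ∈ range k, X j
          + (4 * ∑ j ∈ range k, Vx j ^ 2 + 2 * ∑ j ∈ range k, Vu j ^ 2) * (T / k) := by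
        rw [sum_add_distrib, ← mul_sum, ← sum_mul, sum_add_distrib, ← mul_sum, ← mul_sum]
    _ ≤ 4 * ∑ j ∈ range k, X j + 20 * (T / k) * μ ^ 2 + 6 * T * (4 * (4:ℝ)⁻¹ ^ k) := by
        nlinarith [sq_nonneg μ, (by positivity : 0 ≤ 6 * T * (4 * (4:ℝ)⁻¹ ^ k))]

/-- Derivative `L²` bound propagation for controls: if the mesh values satisfy
`u^k(t_j) − ubar(t_j) = x^k(t_j) − xbar(t_j)` and the derivatives `u̇̄, ẋ̄` have variation at
most `μ`, then `∫₀ᵀ‖u̇^k − u̇̄‖² ≤ 4∫₀ᵀ‖ẋ^k − ẋ̄‖² + 20 h_k μ² + 6T·4^{−k+1}`, where the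
piecewise linear interpolants have derivatives given by the mesh difference quotients. -/
theorem control_derivative_propagation {n : ℕ} (T : ℝ) (hT : 0 < T) (k : ℕ) (hk : 0 < k)
    (ubar u' xbar x' : ℝ → EuclideanSpace ℝ (Fin n)) (μ : ℝ) (hμ : 0 ≤ μ)
    (uv xv : ℕ → EuclideanSpace ℝ (Fin n))
    (hftcu : ∀ a b, a ∈ Icc 0 T → b ∈ Icc 0 T → ubar b - ubar a = ∫ τ in a..b, u' τ)
    (hftcx : ∀ a b, a ∈ Icc 0 T → b ∈ Icc 0 T → xbar b - xbar a = ∫ τ in a..b, x' τ)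
    (humem : MemLp u' 2 (volume.restrict (Icc 0 T)))
    (hxmem : MemLp x' 2 (volume.restrict (Icc 0 T)))
    (hvaru : eVariationOn u' (Icc 0 T) ≤ ENNReal.ofReal μ)
    (hvarx : eVariationOn x' (Icc 0 T) ≤ ENNReal.ofReal μ)
    (hrel : ∀ j ≤ k, uv j - ubar (meshPt T k j) = xv j - xbar (meshPt T k j)) :
    ∑ j ∈ range k, (∫ t in meshPt T k j..meshPt T k (j + 1),
        ‖(T / k)⁻¹ • (uv (j + 1) - uv j) - u' t‖ ^ 2)
      ≤ 4 * ∑ j ∈ range k, (∫ t in meshPt T k j..meshPt T k (j + 1),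
          ‖(T / k)⁻¹ • (xv (j + 1) - xv j) - x' t‖ ^ 2)
        + 20 * (T / k) * μ ^ 2 + 6 * T * (4 * (4:ℝ)⁻¹ ^ k) :=
  control_derivative_propagation_general T hT k ubar u' xbar x' μ hμ uv xv hftcu hftcx humem hxmem
    hvaru hvarx hrel
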